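/- Let V be a distribution on ℝ belonging to the class S(α) for some α ≥ 0 (including the case V̂(α) < 1). Then for every ε > 0 there exists a constant K > 0 such that for all n ∈ ℕ and all x ≥ 0, the n-fold convolution tail satisfies \overline{V^{n*}}(x) ≤ K (V̂(α) + ε)^n V̄(x), where V̂(α) = ∫ e^{αx} V(dx). -/

import Mathlib

open MeasureTheory ProbabilityTheory Filter Asymptotics

noncomputable section

/-- The tail function `Ū(x) = U((x,∞))` of a measure on `ℝ`. -/
def tailDist (μ : Measure ℝ) (x : ℝ) : ℝ := (μ (Set.Ioi x)).toReal

/-- Convolution of two measures on `ℝ`. -/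
def convDist (μ ν : Measure ℝ) : Measure ℝ := (μ.prod ν).map (fun p => p.1 + p.2)

/-- The distribution with CDF `V(x)𝟙_{x ≥ 0}`, i.e. the pushforward under `x ↦ max x 0`. -/
def posMod (μ : Measure ℝ) : Measure ℝ := μ.map (fun x => max x 0)

/-- `V̂(α) = ∫ e^{αx} V(dx)`. -/
def mgfVal (μ : Measure ℝ) (α : ℝ) : ℝ := ∫ x, Real.exp (α * x) ∂μ

/-- The convolution-equivalence class `S(α)`: a distribution `V` on `ℝ` is in `S(α)` if
the distribution with CDF `V(x)𝟙_{x ≥ 0}` has everywhere positive tail,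
`V̄(x-y)/V̄(x) → e^{αy}` for all `y`, `V̂(α) = ∫ e^{αx} V(dx) < ∞`, and
`\overline{V^{2*}}(x)/V̄(x) → 2V̂(α)`. -/
def MemCE (α : ℝ) (V : Measure ℝ) : Prop :=
  (∀ x : ℝ, 0 < tailDist (posMod V) x) ∧
  (∀ y : ℝ, Tendsto (fun x => tailDist (posMod V) (x - y) / tailDist (posMod V) x)
      atTop (nhds (Real.exp (α * y)))) ∧
  Integrable (fun x => Real.exp (α * x)) (posMod V) ∧
  Tendsto (fun x => tailDist (convDist (posMod V) (posMod V)) x / tailDist (posMod V) x)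
      atTop (nhds (2 * mgfVal (posMod V) α))

/-- Strongly regular variation `R*_{-α}`: the distribution `V` with tail
`V̄(x) = Ū(eˣ)/Ū(0)` (i.e. the conditional law of `ln ξ` given `ξ > 0`, where `ξ ∼ U`)
belongs to `S(α)`. -/
def MemSRV (α : ℝ) (U : Measure ℝ) : Prop :=
  U (Set.Ioi 0) ≠ 0 ∧
  MemCE α (((U (Set.Ioi 0))⁻¹ • U.restrict (Set.Ioi 0)).map Real.log)

/-- Regular variation `R_{-α}`: `Ū(x) > 0` for all `x` and `Ū(xy)/Ū(x) → y^{-α}` for `y > 0`. -/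
def MemRV (α : ℝ) (U : Measure ℝ) : Prop :=
  (∀ x : ℝ, 0 < tailDist U x) ∧
  ∀ y : ℝ, 0 < y →
    Tendsto (fun x => tailDist U (x * y) / tailDist U x) atTop (nhds (y ^ (-α)))

/-- Assumption A: every convex combination `pF + (1-p)G`, `0 < p < 1`,
is of strongly regular variation with index `-α`. -/
def AssumpA (α : ℝ) (F G : Measure ℝ) : Prop :=
  ∀ p : ℝ, 0 < p → p < 1 →
    MemSRV α (ENNReal.ofReal p • F + ENNReal.ofReal (1 - p) • G)

end
/-- The `n`-fold convolution `V^{n∗}` of a distribution `V` on `ℝ`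
(`V^{0∗}` is the Dirac mass at `0`). -/
noncomputable def convIter (V : Measure ℝ) : ℕ → Measure ℝ
  | 0 => Measure.dirac 0
  | n + 1 => convDist (convIter V n) V

/-!
Induction on `n`. Let `W` be `V` with its negative part moved to `0` (so `W̄ = V̄` on `[0, ∞)`)
and split `V^{(n+1)∗}(z, ∞) = ∫ V^{n∗}(z - y, ∞) V(dy)` at `y = z - A` and `y = z`.

* `y ≤ z - A`: the induction hypothesis reduces this range to `∫_{y ≤ z-A} W̄(z - y) V(dy)`,
  which is `≤ (V̂(α) + ε/2) W̄(z)` for large `z`: on `y ≤ A` dominated convergence gives the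
  factor `∫_{y ≤ A} e^{αy} V(dy) ≤ V̂(α)`, and on `A < y ≤ z - A` convolution equivalence leaves
  only `o(1)` as `A → ∞`, since the two outer ranges of
  `∫_{y ≤ z} W̄(z - y) W(dy) = \overline{W^{2∗}}(z) - W̄(z) ~ (2Ŵ(α) - 1) W̄(z)` already account
  for `2 ∫_{y ≤ A} e^{αy} W(dy) - W(-∞, A] → 2Ŵ(α) - 1`.
* `z - A < y ≤ z`: Chernoff's bound `V^{n∗}(u, ∞) ≤ e^{-αu} V̂(α)ⁿ` and `W̄(z - A) = O(W̄(z))`.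
* `y > z`: Chernoff's bound raised to a power `s < 1`, with the geometric decay
  `W̄(x + b) ≤ 2 e^{-αb} W̄(x)`, gives `O((V̂(α) + ε/2)ⁿ W̄(z))`.

The `O((V̂(α) + ε/2)ⁿ)` terms are absorbed into `K (V̂(α) + ε)ⁿ ε/2`, and small `z` are handled
by Chernoff's bound alone.
-/

open Set

section Tail

variable (μ : Measure ℝ)

lemma antitone_tailDist [IsFiniteMeasure μ] : Antitone (tailDist μ) := fun _ _ hab =>
  measureReal_mono (Ioi_subset_Ioi hab)

lemma tailDist_nonneg (x : ℝ) : 0 ≤ tailDist μ x := ENNReal.toReal_nonneg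

lemma tailDist_le_one [IsProbabilityMeasure μ] (x : ℝ) : tailDist μ x ≤ 1 := measureReal_le_one

lemma measurable_measure_Ioi_sub (x : ℝ) : Measurable fun y => μ (Ioi (x - y)) :=
  Monotone.measurable fun _ _ h => measure_mono (Ioi_subset_Ioi (by linarith))

lemma integrable_tailDist_sub [IsFiniteMeasure μ] (ν : Measure ℝ) [IsFiniteMeasure ν] (x : ℝ) :
    Integrable (fun y => tailDist μ (x - y)) ν := by
  refine (integrable_const (μ.real univ)).mono'
    ((measurable_measure_Ioi_sub μ x).ennreal_toReal.aestronglyMeasurable) (ae_of_all _ ?_)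
  intro y
  rw [Real.norm_of_nonneg (tailDist_nonneg μ _)]
  exact measureReal_mono (subset_univ _)

lemma ofReal_setIntegral_tailDist_sub [IsFiniteMeasure μ] (ν : Measure ℝ) [IsFiniteMeasure ν]
    (s : Set ℝ) (x : ℝ) :
    ENNReal.ofReal (∫ y in s, tailDist μ (x - y) ∂ν) = ∫⁻ y in s, μ (Ioi (x - y)) ∂ν := by
  rw [ofReal_integral_eq_lintegral_ofReal (integrable_tailDist_sub μ ν x).integrableOn
    (ae_of_all _ fun y => tailDist_nonneg μ _)]
  exact lintegral_congr fun y => ENNReal.ofReal_toReal (measure_ne_top _ _)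

end Tail

section Convolution

lemma convDist_apply_Ioi (μ ν : Measure ℝ) [SFinite μ] [SFinite ν] (x : ℝ) :
    convDist μ ν (Ioi x) = ∫⁻ y, μ (Ioi (x - y)) ∂ν := by
  have hpre : (fun p : ℝ × ℝ => p.1 + p.2) ⁻¹' Ioi x = {p | x - p.2 < p.1} := by
    ext p; simp [sub_lt_iff_lt_add]
  rw [convDist, Measure.map_apply (by fun_prop) measurableSet_Ioi, hpre,
    Measure.prod_apply_symm (hpre ▸ measurableSet_Ioi.preimage (by fun_prop))]
  rfl

lemma tailDist_convDist (μ ν : Measure ℝ) [IsFiniteMeasure μ] [IsFiniteMeasure ν] (x : ℝ) :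
    tailDist (convDist μ ν) x = ∫ y, tailDist μ (x - y) ∂ν := by
  rw [tailDist, convDist_apply_Ioi, ← integral_toReal
    (measurable_measure_Ioi_sub μ x).aemeasurable (ae_of_all _ fun _ => measure_lt_top _ _)]
  rfl

instance isProbabilityMeasure_convDist (μ ν : Measure ℝ) [IsProbabilityMeasure μ]
    [IsProbabilityMeasure ν] : IsProbabilityMeasure (convDist μ ν) :=
  Measure.isProbabilityMeasure_map (by fun_prop)

instance isProbabilityMeasure_convIter (V : Measure ℝ) [IsProbabilityMeasure V] (n : ℕ) :
    IsProbabilityMeasure (convIter V n) := by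
  induction n with
  | zero => exact Measure.dirac.isProbabilityMeasure
  | succ n _ => exact isProbabilityMeasure_convDist _ _

lemma convIter_one (V : Measure ℝ) [SFinite V] : convIter V 1 = V := by
  rw [convIter, convIter, convDist, Measure.dirac_prod,
    Measure.map_map (by fun_prop) (by fun_prop)]
  simp [Function.comp_def]

lemma tailDist_convIter_succ (V : Measure ℝ) [IsProbabilityMeasure V] (n : ℕ) (x : ℝ) :
    tailDist (convIter V (n + 1)) x = ∫ y, tailDist (convIter V n) (x - y) ∂V :=
  tailDist_convDist _ _ x

end Convolution

section PosMod

variable (μ : Measure ℝ)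

instance isProbabilityMeasure_posMod [IsProbabilityMeasure μ] : IsProbabilityMeasure (posMod μ) :=
  Measure.isProbabilityMeasure_map (by fun_prop)

lemma posMod_apply_of_subset_Ioi {s : Set ℝ} (hs : MeasurableSet s) (h : s ⊆ Ioi 0) :
    posMod μ s = μ s := by
  rw [posMod, Measure.map_apply (by fun_prop) hs]
  congr 1
  ext y
  rcases le_or_gt y 0 with hy | hy
  · have h0 : (0 : ℝ) ∉ s := fun h0 => lt_irrefl (0 : ℝ) (h h0)
    simp only [mem_preimage, max_eq_right hy, h0, false_iff]
    exact fun hys => hy.not_gt (mem_Ioi.mp (h hys))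
  · simp [max_eq_left hy.le]

lemma posMod_restrict_of_subset_Ioi {s : Set ℝ} (hs : MeasurableSet s) (h : s ⊆ Ioi 0) :
    (posMod μ).restrict s = μ.restrict s := by
  ext t ht
  rw [Measure.restrict_apply ht, Measure.restrict_apply ht,
    posMod_apply_of_subset_Ioi μ (ht.inter hs) fun y hy => h hy.2]

lemma posMod_Ioi_of_nonneg {x : ℝ} (hx : 0 ≤ x) : posMod μ (Ioi x) = μ (Ioi x) :=
  posMod_apply_of_subset_Ioi μ measurableSet_Ioi fun _ hy => hx.trans_lt hy

lemma tailDist_posMod_of_nonneg {x : ℝ} (hx : 0 ≤ x) : tailDist (posMod μ) x = tailDist μ x := by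
  rw [tailDist, tailDist, posMod_Ioi_of_nonneg μ hx]

lemma tailDist_posMod_of_neg [IsProbabilityMeasure μ] {x : ℝ} (hx : x < 0) :
    tailDist (posMod μ) x = 1 := by
  have : (fun y : ℝ => max y 0) ⁻¹' Ioi x = univ :=
    eq_univ_of_forall fun y => hx.trans_le (le_max_right y 0)
  rw [tailDist, posMod, Measure.map_apply (by fun_prop) measurableSet_Ioi, this]
  simp

lemma setIntegral_Ioi_tailDist_sub_le (ν : Measure ℝ) [IsProbabilityMeasure ν]
    [IsProbabilityMeasure μ] {x : ℝ} (hx : 0 ≤ x) :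
    ∫ y in Ioi x, tailDist ν (x - y) ∂μ ≤ tailDist (posMod μ) x := by
  calc ∫ y in Ioi x, tailDist ν (x - y) ∂μ ≤ ∫ _ in Ioi x, 1 ∂μ :=
        integral_mono (integrable_tailDist_sub ν μ x).integrableOn (integrable_const 1)
          fun _ => tailDist_le_one ν _
    _ = tailDist (posMod μ) x := by
        rw [setIntegral_const, smul_eq_mul, mul_one, tailDist_posMod_of_nonneg μ hx]
        rfl

end PosMod

lemma le_rpow_of_le_of_le_one {p a s : ℝ} (hp₀ : 0 ≤ p) (hp₁ : p ≤ 1) (hpa : p ≤ a)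
    (hs₀ : 0 ≤ s) (hs₁ : s ≤ 1) : p ≤ a ^ s :=
  (Real.self_le_rpow_of_le_one hp₀ hp₁ hs₁).trans (Real.rpow_le_rpow hp₀ hpa hs₀)

section Exponential

variable {V : Measure ℝ} {α : ℝ}

lemma integrable_exp_of_posMod (hα : 0 ≤ α)
    (h : Integrable (fun x => Real.exp (α * x)) (posMod V)) :
    Integrable (fun x => Real.exp (α * x)) V := by
  have hmax : Integrable (fun x => Real.exp (α * max x 0)) V :=
    (integrable_map_measure h.1 (by fun_prop)).mp h
  refine hmax.mono' (by fun_prop) (ae_of_all _ fun x => ?_)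
  rw [Real.norm_of_nonneg (Real.exp_pos _).le]
  exact Real.exp_le_exp.mpr (mul_le_mul_of_nonneg_left (le_max_left x 0) hα)

lemma mgfVal_nonneg (μ : Measure ℝ) (α : ℝ) : 0 ≤ mgfVal μ α :=
  integral_nonneg fun _ => (Real.exp_pos _).le

lemma lintegral_exp_convDist (μ ν : Measure ℝ) [SFinite μ] [SFinite ν] :
    ∫⁻ y, ENNReal.ofReal (Real.exp (α * y)) ∂(convDist μ ν)
      = (∫⁻ y, ENNReal.ofReal (Real.exp (α * y)) ∂μ)
        * ∫⁻ y, ENNReal.ofReal (Real.exp (α * y)) ∂ν := by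
  rw [convDist, lintegral_map (by fun_prop) (by fun_prop),
    ← lintegral_prod_mul (by fun_prop) (by fun_prop)]
  refine lintegral_congr fun p => ?_
  rw [← ENNReal.ofReal_mul (Real.exp_pos _).le, ← Real.exp_add, mul_add]

lemma lintegral_exp_convIter [IsProbabilityMeasure V]
    (h : Integrable (fun x => Real.exp (α * x)) V) (n : ℕ) :
    ∫⁻ y, ENNReal.ofReal (Real.exp (α * y)) ∂(convIter V n)
      = ENNReal.ofReal (mgfVal V α) ^ n := by
  induction n with
  | zero => simp [convIter]
  | succ n ih =>
    rw [convIter, lintegral_exp_convDist, ih, mgfVal, ← ofReal_integral_eq_lintegral_ofReal h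
      (ae_of_all _ fun _ => (Real.exp_pos _).le), pow_succ]

lemma tailDist_convIter_le [IsProbabilityMeasure V] (hα : 0 ≤ α)
    (h : Integrable (fun x => Real.exp (α * x)) V) (n : ℕ) (z : ℝ) :
    tailDist (convIter V n) z ≤ Real.exp (-(α * z)) * mgfVal V α ^ n := by
  have hmarkov : convIter V n (Ioi z)
      ≤ ∫⁻ y, ENNReal.ofReal (Real.exp (-(α * z))) * ENNReal.ofReal (Real.exp (α * y))
          ∂(convIter V n) := by
    rw [← lintegral_indicator_one measurableSet_Ioi]
    refine lintegral_mono fun y => ?_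
    rw [← ENNReal.ofReal_mul (Real.exp_pos _).le, ← Real.exp_add]
    by_cases hy : y ∈ Ioi z
    · rw [indicator_of_mem hy, Pi.one_apply, ← ENNReal.ofReal_one]
      exact ENNReal.ofReal_le_ofReal (Real.one_le_exp (by nlinarith [mem_Ioi.mp hy]))
    · simp [indicator_of_notMem hy]
  rw [lintegral_const_mul _ (by fun_prop), lintegral_exp_convIter h,
    ← ENNReal.ofReal_pow (mgfVal_nonneg V α), ← ENNReal.ofReal_mul (Real.exp_pos _).le]
    at hmarkov
  exact ENNReal.toReal_le_of_le_ofReal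
    (mul_nonneg (Real.exp_pos _).le (pow_nonneg (mgfVal_nonneg V α) n)) hmarkov

lemma tailDist_convIter_le_rpow [IsProbabilityMeasure V] (hα : 0 ≤ α)
    (h : Integrable (fun x => Real.exp (α * x)) V) {s : ℝ} (hs₀ : 0 ≤ s) (hs₁ : s ≤ 1)
    (n : ℕ) (z : ℝ) :
    tailDist (convIter V n) z ≤ Real.exp (-(s * α * z)) * (mgfVal V α ^ s) ^ n := by
  have hm := mgfVal_nonneg V α
  have hbound := le_rpow_of_le_of_le_one (tailDist_nonneg _ _) (tailDist_le_one _ _)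
    (tailDist_convIter_le hα h n z) hs₀ hs₁
  rwa [Real.mul_rpow (Real.exp_pos _).le (pow_nonneg hm n), ← Real.exp_mul,
    ← Real.rpow_pow_comm hm, show -(α * z) * s = -(s * α * z) by ring] at hbound

end Exponential

section Limits

variable {ι : Type*} {l : Filter ι} {f g : ι → ℝ} {L η : ℝ}

lemma eventually_le_mul_of_tendsto_div (hg : ∀ i, 0 < g i)
    (h : Tendsto (fun i => f i / g i) l (nhds L)) (hη : 0 < η) :
    ∀ᶠ i in l, f i ≤ (L + η) * g i := by
  filter_upwards [h.eventually (eventually_le_nhds (lt_add_of_pos_right L hη))] with i hi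
  rwa [div_le_iff₀ (hg i)] at hi

lemma eventually_mul_le_of_tendsto_div (hg : ∀ i, 0 < g i)
    (h : Tendsto (fun i => f i / g i) l (nhds L)) (hη : 0 < η) :
    ∀ᶠ i in l, (L - η) * g i ≤ f i := by
  filter_upwards [h.eventually (eventually_ge_nhds (sub_lt_self L hη))] with i hi
  rwa [le_div_iff₀ (hg i)] at hi

end Limits

lemma setIntegral_Iic_eq_add_Ioc {μ : Measure ℝ} {f : ℝ → ℝ} {a b : ℝ} (hab : a ≤ b)
    (hf : IntegrableOn f (Iic b) μ) :
    ∫ y in Iic b, f y ∂μ = ∫ y in Iic a, f y ∂μ + ∫ y in Ioc a b, f y ∂μ := by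
  rw [← Iic_union_Ioc_eq_Iic hab] at hf ⊢
  exact setIntegral_union (Iic_disjoint_Ioc le_rfl) measurableSet_Ioc
    (hf.mono_set subset_union_left) (hf.mono_set subset_union_right)

lemma integral_eq_setIntegral_Iic_add_Ioc_add_Ioi {μ : Measure ℝ} {f : ℝ → ℝ} {a b : ℝ}
    (hab : a ≤ b) (hf : Integrable f μ) :
    ∫ y, f y ∂μ = ∫ y in Iic a, f y ∂μ + ∫ y in Ioc a b, f y ∂μ + ∫ y in Ioi b, f y ∂μ := by
  rw [← integral_add_compl (measurableSet_Iic (a := b)) hf, compl_Iic,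
    setIntegral_Iic_eq_add_Ioc hab hf.integrableOn]

lemma apply_add_nat_mul_le_pow_mul {f : ℝ → ENNReal} {b x₁ : ℝ} {θ : ENNReal} (hb : 0 ≤ b)
    (h : ∀ x ≥ x₁, f (x + b) ≤ θ * f x) {x : ℝ} (hx : x₁ ≤ x) (j : ℕ) :
    f (x + j * b) ≤ θ ^ j * f x := by
  induction j with
  | zero => simp
  | succ j ih =>
    calc f (x + (j + 1 : ℕ) * b) = f (x + j * b + b) := by push_cast; ring_nf
      _ ≤ θ * f (x + j * b) := h _ (by nlinarith [(j.cast_nonneg : (0 : ℝ) ≤ j)])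
      _ ≤ θ ^ (j + 1) * f x := by rw [pow_succ', mul_assoc]; gcongr

lemma Ioi_subset_iUnion_Ioc_add_nat_mul {b : ℝ} (hb : 0 < b) (x : ℝ) :
    Ioi x ⊆ ⋃ j : ℕ, Ioc (x + j * b) (x + (j + 1) * b) := by
  intro y hy
  have ht : 0 < (y - x) / b := div_pos (sub_pos.mpr hy) hb
  obtain ⟨j, hj⟩ := Nat.exists_eq_add_one_of_ne_zero (Nat.ceil_pos.mpr ht).ne'
  have hlt : (⌈(y - x) / b⌉₊ : ℝ) < (y - x) / b + 1 := Nat.ceil_lt_add_one ht.le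
  have hle : (y - x) / b ≤ ⌈(y - x) / b⌉₊ := Nat.le_ceil _
  rw [hj, Nat.cast_add_one] at hlt hle
  rw [div_le_iff₀ hb] at hle
  rw [← sub_lt_iff_lt_add, add_sub_cancel_right, lt_div_iff₀ hb] at hlt
  exact mem_iUnion.mpr ⟨j, by constructor <;> linarith⟩

/-- Both sides are `μ ⊗ μ`-masses of `{(z, y) | z ≤ A, x - z < y ≤ x}`, integrated in the two
orders (after enlarging the set on the right). -/
lemma lintegral_measure_Ioc_sub_le (μ : Measure ℝ) [SFinite μ] (A x : ℝ) :
    ∫⁻ z in Iic A, μ (Ioc (x - z) x) ∂μ ≤ ∫⁻ y in Ioc (x - A) x, μ (Ioi (x - y)) ∂μ := by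
  set S : Set (ℝ × ℝ) := {p | p.1 ≤ A ∧ x - p.1 < p.2 ∧ p.2 ≤ x}
  have hS : MeasurableSet S :=
    (measurableSet_le measurable_fst measurable_const).inter
      ((measurableSet_lt (by fun_prop) measurable_snd).inter
        (measurableSet_le measurable_snd measurable_const))
  calc ∫⁻ z in Iic A, μ (Ioc (x - z) x) ∂μ = (μ.prod μ) S := by
        rw [Measure.prod_apply hS, ← lintegral_indicator measurableSet_Iic]
        refine lintegral_congr fun z => ?_
        by_cases hz : z ≤ A
        · rw [indicator_of_mem (mem_Iic.mpr hz)]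
          congr 1
          ext y
          simp [S, hz]
        · rw [indicator_of_notMem (by simpa using hz)]
          have : Prod.mk z ⁻¹' S = ∅ := by ext y; simp [S, hz]
          simp [this]
    _ = ∫⁻ y, μ ((fun z => (z, y)) ⁻¹' S) ∂μ := Measure.prod_apply_symm hS
    _ ≤ ∫⁻ y, (Ioc (x - A) x).indicator (fun y => μ (Ioi (x - y))) y ∂μ := by
        refine lintegral_mono fun y => ?_
        by_cases hy : y ∈ Ioc (x - A) x
        · rw [indicator_of_mem hy]
          exact measure_mono fun z hz => by simp only [mem_Ioi]; linarith [hz.2.1]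
        · have : (fun z => (z, y)) ⁻¹' S = ∅ := by
            ext z
            simp only [mem_preimage, mem_ofPred_eq, mem_empty_iff_false, iff_false, S]
            rintro ⟨hz, hzy, hyx⟩
            exact hy ⟨by linarith, hyx⟩
          simp [this]
    _ = ∫⁻ y in Ioc (x - A) x, μ (Ioi (x - y)) ∂μ := lintegral_indicator measurableSet_Ioc _

lemma setIntegral_Iic_tailDist_sub_le (μ : Measure ℝ) [IsFiniteMeasure μ] (A x : ℝ) :
    ∫ z in Iic A, tailDist μ (x - z) ∂μ
      ≤ ∫ y in Ioc (x - A) x, tailDist μ (x - y) ∂μ + μ.real (Iic A) * tailDist μ x := by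
  have hsplit : ∀ z, μ (Ioi (x - z)) ≤ μ (Ioc (x - z) x) + μ (Ioi x) := fun z =>
    (measure_mono (Ioi_subset_Ioc_union_Ioi (b := x))).trans (measure_union_le _ _)
  have hint : 0 ≤ ∫ y in Ioc (x - A) x, tailDist μ (x - y) ∂μ :=
    integral_nonneg fun _ => tailDist_nonneg μ _
  have hprod : 0 ≤ μ.real (Iic A) * tailDist μ x :=
    mul_nonneg measureReal_nonneg (tailDist_nonneg μ x)
  rw [← ENNReal.ofReal_le_ofReal_iff (add_nonneg hint hprod), ENNReal.ofReal_add hint hprod,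
    ofReal_setIntegral_tailDist_sub, ofReal_setIntegral_tailDist_sub,
    ENNReal.ofReal_mul measureReal_nonneg, tailDist, ENNReal.ofReal_toReal (measure_ne_top _ _),
    Measure.real, ENNReal.ofReal_toReal (measure_ne_top _ _)]
  calc ∫⁻ z in Iic A, μ (Ioi (x - z)) ∂μ
      ≤ ∫⁻ z in Iic A, (μ (Ioc (x - z) x) + μ (Ioi x)) ∂μ := lintegral_mono fun z => hsplit z
    _ = ∫⁻ z in Iic A, μ (Ioc (x - z) x) ∂μ + μ (Iic A) * μ (Ioi x) := by
        rw [lintegral_add_right _ measurable_const, setLIntegral_const, mul_comm]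
    _ ≤ _ := add_le_add_left (lintegral_measure_Ioc_sub_le μ A x) _

lemma lintegral_Ioi_exp_le_of_geometric_tail (μ : Measure ℝ) {b β θ x : ℝ} (hβ : 0 ≤ β)
    (hb : 0 < b) (hθ₀ : 0 ≤ θ) (hθ : Real.exp (β * b) * θ = 2⁻¹)
    (htail : ∀ j : ℕ, μ (Ioi (x + j * b)) ≤ ENNReal.ofReal θ ^ j * μ (Ioi x)) :
    ∫⁻ y in Ioi x, ENNReal.ofReal (Real.exp (β * (y - x))) ∂μ
      ≤ ENNReal.ofReal (2 * Real.exp (β * b)) * μ (Ioi x) := by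
  have hpiece : ∀ j : ℕ, ∫⁻ y in Ioc (x + j * b) (x + (j + 1) * b),
      ENNReal.ofReal (Real.exp (β * (y - x))) ∂μ
        ≤ ENNReal.ofReal (Real.exp (β * b)) * 2⁻¹ ^ j * μ (Ioi x) := by
    intro j
    have hexp : Real.exp (β * ((j + 1) * b)) * θ ^ j = Real.exp (β * b) * (2⁻¹) ^ j := by
      rw [← hθ, mul_pow, ← Real.exp_nat_mul,
        show β * ((j + 1) * b) = β * b + j * (β * b) by ring, Real.exp_add]
      ring
    calc ∫⁻ y in Ioc (x + j * b) (x + (j + 1) * b), ENNReal.ofReal (Real.exp (β * (y - x))) ∂μ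
        ≤ ∫⁻ _ in Ioc (x + j * b) (x + (j + 1) * b),
            ENNReal.ofReal (Real.exp (β * ((j + 1) * b))) ∂μ := by
          refine setLIntegral_mono measurable_const fun y hy => ?_
          refine ENNReal.ofReal_le_ofReal (Real.exp_le_exp.mpr ?_)
          exact mul_le_mul_of_nonneg_left (by linarith [hy.2]) hβ
      _ ≤ ENNReal.ofReal (Real.exp (β * ((j + 1) * b))) * μ (Ioi (x + j * b)) := by
          rw [setLIntegral_const]
          gcongr
          exact Ioc_subset_Ioi_self
      _ ≤ ENNReal.ofReal (Real.exp (β * ((j + 1) * b))) * (ENNReal.ofReal θ ^ j * μ (Ioi x)) := by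
          gcongr
          exact htail j
      _ = ENNReal.ofReal (Real.exp (β * b)) * 2⁻¹ ^ j * μ (Ioi x) := by
          rw [← mul_assoc, ← ENNReal.ofReal_pow hθ₀, ← ENNReal.ofReal_mul (by positivity),
            hexp, ENNReal.ofReal_mul (by positivity), ENNReal.ofReal_pow (by norm_num),
            ENNReal.ofReal_inv_of_pos two_pos, ENNReal.ofReal_ofNat]
  calc ∫⁻ y in Ioi x, ENNReal.ofReal (Real.exp (β * (y - x))) ∂μ
      ≤ ∫⁻ y in ⋃ j : ℕ, Ioc (x + j * b) (x + (j + 1) * b),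
          ENNReal.ofReal (Real.exp (β * (y - x))) ∂μ :=
        lintegral_mono_set (Ioi_subset_iUnion_Ioc_add_nat_mul hb x)
    _ ≤ ∑' j : ℕ, ∫⁻ y in Ioc (x + j * b) (x + (j + 1) * b),
          ENNReal.ofReal (Real.exp (β * (y - x))) ∂μ := lintegral_iUnion_le _ _
    _ ≤ ∑' j : ℕ, ENNReal.ofReal (Real.exp (β * b)) * 2⁻¹ ^ j * μ (Ioi x) :=
        ENNReal.tsum_le_tsum hpiece
    _ = ENNReal.ofReal (2 * Real.exp (β * b)) * μ (Ioi x) := by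
        rw [ENNReal.tsum_mul_right, ENNReal.tsum_mul_left, ENNReal.tsum_geometric,
          ENNReal.one_sub_inv_two, inv_inv, ENNReal.ofReal_mul zero_le_two, ENNReal.ofReal_ofNat,
          mul_comm (ENNReal.ofReal _) 2]

section ConvolutionEquivalent

variable {V : Measure ℝ} {α : ℝ}

lemma eventually_tailDist_sub_le [IsProbabilityMeasure V] (hV : MemCE α V) (A : ℝ) :
    ∀ᶠ x in atTop, ∀ y ∈ Iic A,
      tailDist (posMod V) (x - y) ≤ (Real.exp (α * A) + 1) * tailDist (posMod V) x := by
  filter_upwards [eventually_le_mul_of_tendsto_div hV.1 (hV.2.1 A) one_pos] with x hx y hy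
  exact (antitone_tailDist _ (by linarith [mem_Iic.mp hy])).trans hx

lemma tendsto_setIntegral_tailDist_sub_div (hV : MemCE α V) (μ : Measure ℝ) [IsFiniteMeasure μ]
    {S : Set ℝ} (hS : MeasurableSet S) {C : ℝ}
    (hbound : ∀ᶠ x in atTop, ∀ y ∈ S,
      tailDist (posMod V) (x - y) ≤ C * tailDist (posMod V) x) :
    Tendsto (fun x => (∫ y in S, tailDist (posMod V) (x - y) ∂μ) / tailDist (posMod V) x)
      atTop (nhds (∫ y in S, Real.exp (α * y) ∂μ)) := by
  simp_rw [← integral_div]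
  refine tendsto_integral_filter_of_dominated_convergence (fun _ => C)
    (Eventually.of_forall fun x =>
      ((measurable_measure_Ioi_sub _ x).ennreal_toReal.div_const _).aestronglyMeasurable)
    ?_ (integrable_const C) (ae_of_all _ hV.2.1)
  filter_upwards [hbound] with x hx
  refine (ae_restrict_iff' hS).mpr (ae_of_all _ fun y hy => ?_)
  rw [Real.norm_of_nonneg (div_nonneg (tailDist_nonneg _ _) (tailDist_nonneg _ _)),
    div_le_iff₀ (hV.1 x)]
  exact hx y hy

lemma tailDist_convDist_posMod_self [IsProbabilityMeasure V] (x : ℝ) :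
    tailDist (convDist (posMod V) (posMod V)) x
      = ∫ y in Iic x, tailDist (posMod V) (x - y) ∂(posMod V) + tailDist (posMod V) x := by
  rw [tailDist_convDist, ← integral_add_compl measurableSet_Iic (integrable_tailDist_sub _ _ x),
    compl_Iic, setIntegral_congr_fun measurableSet_Ioi
      fun y hy => tailDist_posMod_of_neg V (sub_neg.mpr hy), setIntegral_const, smul_eq_mul,
    mul_one]
  rfl

/-- The outer ranges `y ≤ A` and `x - A < y ≤ x` of `∫_{y ≤ x} W̄(x - y) W(dy)` each contribute
about `∫_{y ≤ A} e^{αy} W(dy) W̄(x)`, the second up to `W(-∞, A] W̄(x)`. -/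
lemma eventually_setIntegral_Ioc_le [IsProbabilityMeasure V] (hV : MemCE α V) {A : ℝ}
    (hA : 0 ≤ A) {η : ℝ} (hη : 0 < η) :
    ∀ᶠ x in atTop, ∫ y in Ioc A (x - A), tailDist (posMod V) (x - y) ∂(posMod V)
      ≤ (2 * mgfVal (posMod V) α - 1 - 2 * ∫ y in Iic A, Real.exp (α * y) ∂(posMod V)
          + (posMod V).real (Iic A) + η) * tailDist (posMod V) x := by
  have hconv : Tendsto (fun x => (∫ y in Iic x, tailDist (posMod V) (x - y) ∂(posMod V))
      / tailDist (posMod V) x) atTop (nhds (2 * mgfVal (posMod V) α - 1)) := by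
    refine (hV.2.2.2.sub_const 1).congr fun x => ?_
    rw [tailDist_convDist_posMod_self, add_div, div_self (hV.1 x).ne']
    ring
  filter_upwards [eventually_le_mul_of_tendsto_div hV.1 hconv (div_pos hη three_pos),
    eventually_mul_le_of_tendsto_div hV.1 (tendsto_setIntegral_tailDist_sub_div hV (posMod V)
      measurableSet_Iic (eventually_tailDist_sub_le hV A)) (div_pos hη three_pos),
    eventually_ge_atTop (2 * A)] with x hall hhead hx
  have hint := (integrable_tailDist_sub (posMod V) (posMod V) x).integrableOn (s := Iic x)
  rw [setIntegral_Iic_eq_add_Ioc (a := x - A) (by linarith) hint,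
    setIntegral_Iic_eq_add_Ioc (a := A) (by linarith)
      (hint.mono_set (Iic_subset_Iic.mpr (by linarith)))] at hall
  have hrefl := setIntegral_Iic_tailDist_sub_le (posMod V) A x
  linarith

lemma exists_eventually_setIntegral_Iic_sub_le [IsProbabilityMeasure V] (hα : 0 ≤ α)
    (hV : MemCE α V) {δ : ℝ} (hδ : 0 < δ) :
    ∃ A, 0 ≤ A ∧ ∀ᶠ x in atTop, ∫ y in Iic (x - A), tailDist (posMod V) (x - y) ∂V
      ≤ (mgfVal V α + δ) * tailDist (posMod V) x := by
  set W := posMod V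
  have hexp : Tendsto (fun A => ∫ y in Iic A, Real.exp (α * y) ∂W) atTop
      (nhds (mgfVal W α)) := by
    have := tendsto_setIntegral_of_monotone (μ := W) (f := fun y => Real.exp (α * y))
      (fun _ => measurableSet_Iic) monotone_Iic (by rw [iUnion_Iic]; exact hV.2.2.1.integrableOn)
    rwa [iUnion_Iic, Measure.restrict_univ] at this
  have hmass : Tendsto (fun A => W.real (Iic A)) atTop (nhds 1) := by
    simpa [Function.comp_def, Measure.real] using
      (ENNReal.tendsto_toReal (measure_ne_top W univ)).comp (tendsto_measure_Iic_atTop W)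
  have hsmall : Tendsto (fun A => 2 * mgfVal W α - 1 - 2 * ∫ y in Iic A, Real.exp (α * y) ∂W
      + W.real (Iic A)) atTop (nhds 0) := by
    convert ((tendsto_const_nhds (x := 2 * mgfVal W α - 1)).sub (hexp.const_mul 2)).add hmass
      using 2
    ring
  obtain ⟨A, hAsmall, hA⟩ := ((hsmall.eventually
    (eventually_le_nhds (div_pos hδ three_pos))).and (eventually_ge_atTop 0)).exists
  refine ⟨A, hA, ?_⟩
  have hhead_le : ∫ y in Iic A, Real.exp (α * y) ∂V ≤ mgfVal V α :=
    setIntegral_le_integral (integrable_exp_of_posMod hα hV.2.2.1)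
      (ae_of_all _ fun _ => (Real.exp_pos _).le)
  filter_upwards [eventually_le_mul_of_tendsto_div hV.1 (tendsto_setIntegral_tailDist_sub_div hV V
      measurableSet_Iic (eventually_tailDist_sub_le hV A)) (div_pos hδ three_pos),
    eventually_setIntegral_Ioc_le hV hA (div_pos hδ three_pos),
    eventually_ge_atTop (2 * A)] with x hhead hmid hx
  rw [setIntegral_Iic_eq_add_Ioc (a := A) (by linarith)
      (integrable_tailDist_sub W V x).integrableOn,
    ← posMod_restrict_of_subset_Ioi V measurableSet_Ioc fun y hy => hA.trans_lt hy.1]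
  have := mul_le_mul_of_nonneg_right hhead_le (tailDist_nonneg W x)
  have := mul_le_mul_of_nonneg_right hAsmall (tailDist_nonneg W x)
  linarith

lemma exists_lintegral_Ioi_exp_le [IsProbabilityMeasure V] {β : ℝ}
    (hV : MemCE α V) (hβ : 0 ≤ β) (hβα : β < α) :
    ∃ C, 0 ≤ C ∧ ∀ᶠ x in atTop, ∫⁻ y in Ioi x, ENNReal.ofReal (Real.exp (β * (y - x))) ∂V
      ≤ ENNReal.ofReal C * posMod V (Ioi x) := by
  set b := Real.log 4 / (α - β)
  have hb : 0 < b := div_pos (Real.log_pos (by norm_num)) (sub_pos.mpr hβα)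
  set θ := 2 * Real.exp (-(α * b))
  -- `b` is chosen so that `e^{βb} θ = 2 e^{-(α - β) b} = 1/2`.
  have hθ : Real.exp (β * b) * θ = 2⁻¹ := by
    have hlog : (α - β) * b = Real.log 4 := mul_div_cancel₀ _ (sub_pos.mpr hβα).ne'
    rw [mul_left_comm, ← Real.exp_add, show β * b + -(α * b) = -((α - β) * b) by ring, hlog,
      Real.exp_neg, Real.exp_log (by norm_num)]
    norm_num
  have hslice : ∀ᶠ x in atTop, posMod V (Ioi (x + b)) ≤ ENNReal.ofReal θ * posMod V (Ioi x) := by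
    filter_upwards [eventually_le_mul_of_tendsto_div hV.1 (hV.2.1 (-b))
      (Real.exp_pos (-(α * b)))] with x hx
    rw [sub_neg_eq_add, mul_neg, ← two_mul] at hx
    rw [← ENNReal.ofReal_toReal (measure_ne_top (posMod V) (Ioi (x + b))),
      ← ENNReal.ofReal_toReal (measure_ne_top (posMod V) (Ioi x)),
      ← ENNReal.ofReal_mul (by positivity)]
    exact ENNReal.ofReal_le_ofReal hx
  obtain ⟨x₁, hx₁⟩ := eventually_atTop.mp hslice
  refine ⟨2 * Real.exp (β * b), by positivity, ?_⟩
  filter_upwards [eventually_ge_atTop (max x₁ 0)] with x hx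
  have hx₀ : 0 ≤ x := (le_max_right _ _).trans hx
  rw [posMod_Ioi_of_nonneg V hx₀]
  refine lintegral_Ioi_exp_le_of_geometric_tail V hβ hb (by positivity) hθ fun j => ?_
  rw [← posMod_Ioi_of_nonneg V hx₀, ← posMod_Ioi_of_nonneg V (by positivity)]
  exact apply_add_nat_mul_le_pow_mul hb.le hx₁ ((le_max_left _ _).trans hx) j

/-- For `α > 0`, take `s < 1` so close to `1` that `V̂(α)^s < ρ`: the weight `e^{sαu}` left by
`tailDist_convIter_le_rpow` is still integrable against the tail of `V`, as `sα < α`. -/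
lemma exists_setIntegral_Ioi_tailDist_convIter_le [IsProbabilityMeasure V] (hα : 0 ≤ α)
    (hV : MemCE α V) {ρ : ℝ} (hρ : mgfVal V α < ρ) :
    ∃ C, 0 ≤ C ∧ ∀ᶠ x in atTop, ∀ n : ℕ, ∫ y in Ioi x, tailDist (convIter V n) (x - y) ∂V
      ≤ C * ρ ^ n * tailDist (posMod V) x := by
  have hexp := integrable_exp_of_posMod hα hV.2.2.1
  have hm : 0 < mgfVal V α := integral_exp_pos hexp
  rcases hα.eq_or_lt with rfl | hαpos
  · have hρ₁ : 1 ≤ ρ := by simpa [mgfVal] using hρ.le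
    refine ⟨1, zero_le_one, ?_⟩
    filter_upwards [eventually_ge_atTop 0] with x hx n
    rw [one_mul]
    exact (setIntegral_Ioi_tailDist_sub_le V (convIter V n) hx).trans
      (le_mul_of_one_le_left (tailDist_nonneg _ x) (one_le_pow₀ hρ₁))
  obtain ⟨s, hsρ, hs₀, hs₁⟩ : ∃ s : ℝ, mgfVal V α ^ s < ρ ∧ 0 < s ∧ s < 1 := by
    have hnear : ∀ᶠ s in nhds (1 : ℝ), mgfVal V α ^ s < ρ :=
      (Real.continuousAt_const_rpow hm.ne').eventually (gt_mem_nhds (by simpa using hρ))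
    exact ((hnear.filter_mono nhdsWithin_le_nhds).and (Ioo_mem_nhdsLT one_pos)).exists
  obtain ⟨C, hC₀, hC⟩ := exists_lintegral_Ioi_exp_le hV (mul_nonneg hs₀.le hα)
    (mul_lt_of_lt_one_left hαpos hs₁)
  have hρ₀ : 0 ≤ ρ := hm.le.trans hρ.le
  refine ⟨C, hC₀, ?_⟩
  filter_upwards [hC] with x hx n
  have hpoint : ∀ y, tailDist (convIter V n) (x - y)
      ≤ ρ ^ n * Real.exp (s * α * (y - x)) := by
    intro y
    calc _ ≤ Real.exp (-(s * α * (x - y))) * (mgfVal V α ^ s) ^ n :=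
          tailDist_convIter_le_rpow hα hexp hs₀.le hs₁.le n (x - y)
      _ ≤ ρ ^ n * Real.exp (s * α * (y - x)) := by
          rw [mul_comm, show -(s * α * (x - y)) = s * α * (y - x) by ring]
          gcongr
  rw [← ENNReal.ofReal_le_ofReal_iff
    (mul_nonneg (mul_nonneg hC₀ (pow_nonneg hρ₀ n)) (tailDist_nonneg _ x)),
    ofReal_setIntegral_tailDist_sub]
  calc ∫⁻ y in Ioi x, convIter V n (Ioi (x - y)) ∂V
      ≤ ∫⁻ y in Ioi x, ENNReal.ofReal (ρ ^ n) * ENNReal.ofReal (Real.exp (s * α * (y - x))) ∂V := by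
        refine lintegral_mono fun y => ?_
        rw [← ENNReal.ofReal_mul (by positivity), ← ENNReal.ofReal_toReal (measure_ne_top _ _)]
        exact ENNReal.ofReal_le_ofReal (hpoint y)
    _ ≤ ENNReal.ofReal (ρ ^ n) * (ENNReal.ofReal C * posMod V (Ioi x)) := by
        rw [lintegral_const_mul _ (by fun_prop)]
        gcongr
    _ = ENNReal.ofReal (C * ρ ^ n * tailDist (posMod V) x) := by
        rw [tailDist, ENNReal.ofReal_mul (by positivity), ENNReal.ofReal_mul hC₀,
          ENNReal.ofReal_toReal (measure_ne_top _ _)]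
        ring

lemma exists_tailDist_convIter_succ_le [IsProbabilityMeasure V] (hα : 0 ≤ α)
    (hV : MemCE α V) {δ : ℝ} (hδ : 0 < δ) :
    ∃ x₀ C, 0 ≤ C ∧ ∀ z ≥ x₀, ∀ (n : ℕ) (c : ℝ), 0 ≤ c →
      (∀ w ≥ 0, tailDist (convIter V n) w ≤ c * tailDist (posMod V) w) →
      tailDist (convIter V (n + 1)) z
        ≤ (c * (mgfVal V α + δ) + C * (mgfVal V α + δ) ^ n) * tailDist (posMod V) z := by
  have hexp := integrable_exp_of_posMod hα hV.2.2.1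
  have hm : 0 ≤ mgfVal V α := mgfVal_nonneg V α
  obtain ⟨A, hA, hcore⟩ := exists_eventually_setIntegral_Iic_sub_le hα hV hδ
  obtain ⟨C, hC, hchunk⟩ := exists_setIntegral_Ioi_tailDist_convIter_le hα hV
    (lt_add_of_pos_right _ hδ)
  obtain ⟨x₀, hx₀⟩ := eventually_atTop.mp
    (hcore.and (hchunk.and ((eventually_tailDist_sub_le hV A).and (eventually_ge_atTop A))))
  refine ⟨x₀, Real.exp (α * A) + 1 + C, by positivity, fun z hz n c hc ih => ?_⟩
  obtain ⟨hcore, hchunk, hratio, hzA⟩ := hx₀ z hz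
  have hint := integrable_tailDist_sub (convIter V n) V z
  have hhead : ∫ y in Iic (z - A), tailDist (convIter V n) (z - y) ∂V
      ≤ c * (mgfVal V α + δ) * tailDist (posMod V) z :=
    calc ∫ y in Iic (z - A), tailDist (convIter V n) (z - y) ∂V
        ≤ ∫ y in Iic (z - A), c * tailDist (posMod V) (z - y) ∂V :=
          setIntegral_mono_on hint.integrableOn
            ((integrable_tailDist_sub _ V z).const_mul c).integrableOn measurableSet_Iic
            fun y hy => ih _ (by linarith [mem_Iic.mp hy])
      _ ≤ c * ((mgfVal V α + δ) * tailDist (posMod V) z) := by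
          rw [integral_const_mul]
          exact mul_le_mul_of_nonneg_left hcore hc
      _ = _ := by ring
  have hmiddle : ∫ y in Ioc (z - A) z, tailDist (convIter V n) (z - y) ∂V
      ≤ (Real.exp (α * A) + 1) * (mgfVal V α + δ) ^ n * tailDist (posMod V) z :=
    calc ∫ y in Ioc (z - A) z, tailDist (convIter V n) (z - y) ∂V
        ≤ ∫ _ in Ioc (z - A) z, mgfVal V α ^ n ∂V := by
          refine setIntegral_mono_on hint.integrableOn (integrable_const _).integrableOn
            measurableSet_Ioc fun y hy => (tailDist_convIter_le hα hexp n (z - y)).trans ?_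
          refine mul_le_of_le_one_left (pow_nonneg hm n) (Real.exp_le_one_iff.mpr ?_)
          nlinarith [hy.2]
      _ ≤ mgfVal V α ^ n * tailDist (posMod V) (z - A) := by
          rw [setIntegral_const, smul_eq_mul, mul_comm,
            tailDist_posMod_of_nonneg V (by linarith)]
          gcongr
          exact measureReal_mono Ioc_subset_Ioi_self
      _ ≤ (mgfVal V α + δ) ^ n * ((Real.exp (α * A) + 1) * tailDist (posMod V) z) :=
          mul_le_mul (pow_le_pow_left₀ hm (by linarith) n) (hratio A (mem_Iic.mpr le_rfl))
            (tailDist_nonneg _ _) (by positivity)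
      _ = _ := by ring
  rw [tailDist_convIter_succ,
    integral_eq_setIntegral_Iic_add_Ioc_add_Ioi (a := z - A) (b := z) (by linarith) hint]
  linarith [hchunk n]

lemma tailDist_convIter_le_of_succ_le [IsProbabilityMeasure V] (hα : 0 ≤ α)
    (hexp : Integrable (fun x => Real.exp (α * x)) V) {ε x₀ C K : ℝ} (hε : 0 < ε) (hK : 0 ≤ K)
    (hstep : ∀ z ≥ x₀, ∀ (n : ℕ) (c : ℝ), 0 ≤ c →
      (∀ w ≥ 0, tailDist (convIter V n) w ≤ c * tailDist (posMod V) w) →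
      tailDist (convIter V (n + 1)) z
        ≤ (c * (mgfVal V α + ε / 2) + C * (mgfVal V α + ε / 2) ^ n) * tailDist (posMod V) z)
    (hKq : 1 ≤ K * (mgfVal V α + ε)) (hKC : C ≤ K * (ε / 2))
    (hKT : 1 ≤ K * tailDist (posMod V) x₀) :
    ∀ n ≥ 1, ∀ z ≥ 0,
      tailDist (convIter V n) z ≤ K * (mgfVal V α + ε) ^ n * tailDist (posMod V) z := by
  have hm := mgfVal_nonneg V α
  intro n hn
  induction n, hn using Nat.le_induction with
  | base =>
    intro z hz
    rw [convIter_one, ← tailDist_posMod_of_nonneg V hz, pow_one]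
    exact le_mul_of_one_le_left (tailDist_nonneg _ z) hKq
  | succ n hn ih =>
    intro z hz
    rcases lt_or_ge z x₀ with hzx | hzx
    · calc tailDist (convIter V (n + 1)) z
          ≤ Real.exp (-(α * z)) * mgfVal V α ^ (n + 1) := tailDist_convIter_le hα hexp _ z
        _ ≤ 1 * (mgfVal V α + ε) ^ (n + 1) :=
          mul_le_mul (Real.exp_le_one_iff.mpr (by nlinarith))
            (pow_le_pow_left₀ hm (by linarith) _) (by positivity) zero_le_one
        _ ≤ K * tailDist (posMod V) z * (mgfVal V α + ε) ^ (n + 1) := by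
          gcongr
          exact hKT.trans (mul_le_mul_of_nonneg_left (antitone_tailDist _ hzx.le) hK)
        _ = _ := by ring
    · have hC : C * (mgfVal V α + ε / 2) ^ n ≤ K * (ε / 2) * (mgfVal V α + ε) ^ n :=
        mul_le_mul hKC (pow_le_pow_left₀ (by positivity) (by linarith) n) (by positivity)
          (by positivity)
      calc tailDist (convIter V (n + 1)) z
          ≤ (K * (mgfVal V α + ε) ^ n * (mgfVal V α + ε / 2) + C * (mgfVal V α + ε / 2) ^ n)
            * tailDist (posMod V) z := hstep z hzx n _ (by positivity) ih
        _ ≤ (K * (mgfVal V α + ε) ^ n * (mgfVal V α + ε / 2)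
            + K * (ε / 2) * (mgfVal V α + ε) ^ n) * tailDist (posMod V) z :=
          mul_le_mul_of_nonneg_right (by linarith) (tailDist_nonneg _ z)
        _ = K * (mgfVal V α + ε) ^ (n + 1) * tailDist (posMod V) z := by ring

end ConvolutionEquivalent

/-- Lemma 3.6 (Kesten's bound without requiring `V̂(α) ≥ 1`): if `V ∈ S(α)` then for every
`ε > 0` there is `K > 0` with `\overline{V^{n∗}}(x) ≤ K (V̂(α)+ε)ⁿ V̄(x)` for all `n ≥ 1`
and all `x ≥ 0`. -/
theorem stmt_13
    (V : Measure ℝ) [IsProbabilityMeasure V]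
    (α : ℝ) (hα : 0 ≤ α) (hV : MemCE α V)
    (ε : ℝ) (hε : 0 < ε) :
    ∃ K : ℝ, 0 < K ∧ ∀ n : ℕ, 1 ≤ n → ∀ x : ℝ, 0 ≤ x →
      tailDist (convIter V n) x ≤ K * (mgfVal V α + ε) ^ n * tailDist V x := by
  have hexp := integrable_exp_of_posMod hα hV.2.2.1
  obtain ⟨x₀, C, hC, hstep⟩ := exists_tailDist_convIter_succ_le hα hV (half_pos hε)
  have hq : 0 < mgfVal V α + ε := by linarith [mgfVal_nonneg V α]
  have hT₀ := hV.1 x₀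
  set K := 1 / (mgfVal V α + ε) + 2 * C / ε + 1 / tailDist (posMod V) x₀
  have hK₁ : 0 ≤ 1 / (mgfVal V α + ε) := by positivity
  have hK₂ : 0 ≤ 2 * C / ε := by positivity
  have hK₃ : 0 ≤ 1 / tailDist (posMod V) x₀ := by positivity
  have hKq : 1 ≤ K * (mgfVal V α + ε) := (div_le_iff₀ hq).mp (by linarith)
  have hKC : C ≤ K * (ε / 2) := by linarith [(div_le_iff₀ hε).mp (by linarith : 2 * C / ε ≤ K)]
  have hKT : 1 ≤ K * tailDist (posMod V) x₀ := (div_le_iff₀ hT₀).mp (by linarith)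
  have key := tailDist_convIter_le_of_succ_le hα hexp hε (by positivity) hstep hKq hKC hKT
  refine ⟨K, by positivity, fun n hn x hx => ?_⟩
  rw [← tailDist_posMod_of_nonneg V hx]
  exact key n hn x hx
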